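/- Let n ≥ 3, let d ≥ n−2 be rational, set t = d·M/S and assume t < 1 and m > n, and set ε = t/(4·A·n²·m²). If there exists a t-feasible integral partition with at least two almost-full machines, then there exists a t-feasible integral partition with exactly two almost-full machines. -/

import Mathlib

/-- Completion time of machine `i` under integral partition `P`. -/
def btime {m n : ℕ} (x : Fin m → ℕ) (r : Fin n → ℕ) (P : Fin m → Fin n) (i : Fin n) : ℚ :=
  (∑ j ∈ Finset.univ.filter (fun j => P j = i), (x j : ℚ)) / (r i : ℚ)

/-! If three or more machines are almost-full, the remaining (at most `n - 3`) machines cannot all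
lack room below the threshold `θ = (1 + t)S/(1 + ε)` for a job of maximal size `AM`: the total room
`Σ (rᵢθ - loadᵢ) = AS(t - ε)/(1 + ε)` exceeds `(n - 3)AM ≤ (n - 3)AtS/(n - 2)` by the choice of `ε`,
while almost-full machines have negative room. Moving one job from an almost-full machine to a
machine with such room keeps the partition `t`-feasible, creates no almost-full machine, removes at
most one, and strictly decreases the total size of the jobs on almost-full machines; so iterating
stops at exactly two. -/

open Finset Function

theorem exists_eq_of_descent {α : Type*} (p : α → Prop) (c f : α → ℕ) (k : ℕ)
    (step : ∀ a, p a → k < c a → ∃ b, p b ∧ c a ≤ c b + 1 ∧ f b < f a)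
    (a : α) (ha : p a) (hk : k ≤ c a) : ∃ b, p b ∧ c b = k := by
  induction a using (measure f).wf.induction with
  | _ a ih =>
    rcases hk.eq_or_lt with h | h
    · exact ⟨a, ha, h.symm⟩
    · obtain ⟨b, hb, hcb, hfb⟩ := step a ha h
      exact ih b hfb hb (by omega)

namespace Scheduling

variable {m n : ℕ} (x : Fin m → ℕ) (r : Fin n → ℕ)

def load (P : Fin m → Fin n) (i : Fin n) : ℚ :=
  ∑ j ∈ univ.filter (fun j => P j = i), (x j : ℚ)

def almostFull (P : Fin m → Fin n) (θ : ℚ) : Finset (Fin n) :=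
  univ.filter (fun i => θ < btime x r P i)

def fullWeight (P : Fin m → Fin n) (θ : ℚ) : ℕ :=
  ∑ j ∈ univ.filter (fun j => P j ∈ almostFull x r P θ), x j

variable {x r}

theorem card_almostFull_le {P : Fin m → Fin n} {θ : ℚ} : #(almostFull x r P θ) ≤ n :=
  (card_le_univ _).trans_eq (Fintype.card_fin n)

theorem btime_eq_load_div (P : Fin m → Fin n) (i : Fin n) :
    btime x r P i = load x P i / r i := rfl

theorem sum_load (P : Fin m → Fin n) : ∑ i, load x P i = ∑ j, (x j : ℚ) :=
  sum_fiberwise univ P _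

theorem exists_eq_of_load_pos {P : Fin m → Fin n} {i : Fin n} (h : 0 < load x P i) :
    ∃ j, P j = i := by
  obtain ⟨j, hj, -⟩ := exists_ne_zero_of_sum_ne_zero h.ne'
  exact ⟨j, (mem_filter.mp hj).2⟩

theorem load_update (P : Fin m → Fin n) (j : Fin m) (i k : Fin n) :
    load x (update P j i) k =
      load x P k - (if P j = k then (x j : ℚ) else 0) + (if i = k then (x j : ℚ) else 0) := by
  simp only [load, sum_filter]
  rw [← add_sum_erase _ _ (mem_univ j), ← add_sum_erase _ _ (mem_univ j),
    sum_congr rfl fun j' hj' => by rw [update_of_ne (ne_of_mem_erase hj')]]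
  simp only [update_self]
  ring

section Move

variable {P : Fin m → Fin n} {j : Fin m} {i : Fin n} {θ : ℚ}

theorem btime_update_target (hji : P j ≠ i) :
    btime x r (update P j i) i = (load x P i + x j) / r i := by
  simp [btime_eq_load_div, load_update, hji]

theorem btime_update_le {k : Fin n} (hk : k ≠ i) :
    btime x r (update P j i) k ≤ btime x r P k := by
  simp only [btime_eq_load_div, load_update, if_neg hk.symm, add_zero]
  gcongr
  split_ifs <;> simp

theorem btime_update_of_ne {k : Fin n} (hk : k ≠ i) (hjk : P j ≠ k) :
    btime x r (update P j i) k = btime x r P k := by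
  simp [btime_eq_load_div, load_update, hk.symm, hjk]

variable (hri : 0 < r i) (hroom : load x P i + x j < r i * θ)
include hri hroom

theorem btime_lt_of_load_add_lt : btime x r P i < θ := by
  rw [btime_eq_load_div, div_lt_iff₀ (by exact_mod_cast hri), mul_comm]
  linarith [(x j).cast_nonneg (α := ℚ)]

theorem btime_update_lt (hji : P j ≠ i) : btime x r (update P j i) i < θ := by
  rw [btime_update_target hji, div_lt_iff₀ (by exact_mod_cast hri), mul_comm]
  exact hroom

theorem almostFull_update_subset (hji : P j ≠ i) :
    almostFull x r (update P j i) θ ⊆ almostFull x r P θ := by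
  intro k hk
  simp only [almostFull, mem_filter, mem_univ, true_and] at hk ⊢
  have hki : k ≠ i := by
    rintro rfl
    exact (btime_update_lt hri hroom hji).not_gt hk
  exact hk.trans_le (btime_update_le hki)

theorem almostFull_subset_insert_update :
    almostFull x r P θ ⊆ insert (P j) (almostFull x r (update P j i) θ) := by
  intro k hk
  simp only [almostFull, mem_filter, mem_univ, true_and, mem_insert] at hk ⊢
  by_cases hjk : P j = k
  · exact Or.inl hjk.symm
  have hki : k ≠ i := by
    rintro rfl
    exact (btime_lt_of_load_add_lt hri hroom).not_gt hk
  exact Or.inr (by rwa [btime_update_of_ne hki hjk])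

theorem fullWeight_update_lt (hxj : 0 < x j) (hji : P j ≠ i)
    (hfull : P j ∈ almostFull x r P θ) :
    fullWeight x r (update P j i) θ < fullWeight x r P θ := by
  have hj : j ∈ univ.filter (fun j' => P j' ∈ almostFull x r P θ) := by simpa using hfull
  have hsub : univ.filter (fun j' => update P j i j' ∈ almostFull x r (update P j i) θ) ⊆
      (univ.filter (fun j' => P j' ∈ almostFull x r P θ)).erase j := by
    intro j' hj'
    simp only [mem_filter, mem_univ, true_and, mem_erase] at hj' ⊢
    have hj'j : j' ≠ j := by
      rintro rfl
      rw [update_self] at hj'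
      exact (btime_update_lt hri hroom hji).not_gt (mem_filter.mp hj').2
    rw [update_of_ne hj'j] at hj'
    exact ⟨hj'j, almostFull_update_subset hri hroom hji hj'⟩
  calc fullWeight x r (update P j i) θ
      ≤ ∑ j' ∈ (univ.filter (fun j' => P j' ∈ almostFull x r P θ)).erase j, x j' :=
        sum_le_sum_of_subset hsub
    _ < x j + ∑ j' ∈ (univ.filter (fun j' => P j' ∈ almostFull x r P θ)).erase j, x j' := by
        omega
    _ = fullWeight x r P θ := add_sum_erase _ _ hj

end Move

theorem sub_three_mul_lt_slack {n A m : ℕ} {S M d t ε : ℚ} (hn : 3 ≤ n) (hnA : n ≤ A) (hm : 0 < m)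
    (hS : 0 < S) (hM : 0 < M) (hd : (n : ℚ) - 2 ≤ d) (ht : t = d * M / S) (ht1 : t < 1)
    (hε : ε = t / (4 * (A : ℚ) * (n : ℚ) ^ 2 * (m : ℚ) ^ 2)) :
    ((n : ℚ) - 3) * (A * M) < (1 + t) * S / (1 + ε) * A - A * S := by
  have hn' : (3 : ℚ) ≤ n := by exact_mod_cast hn
  have hA' : (n : ℚ) ≤ A := by exact_mod_cast hnA
  have hm' : (1 : ℚ) ≤ m := by exact_mod_cast hm
  have htS : t * S = d * M := by rw [ht]; field_simp
  have hA0 : (0 : ℚ) < A := by linarith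
  have ht0 : 0 < t := by
    have : 0 < d := by linarith
    rw [ht]; positivity
  have hε0 : 0 < ε := by rw [hε]; positivity
  have hMt : ((n : ℚ) - 2) * M ≤ t * S := htS ▸ mul_le_mul_of_nonneg_right hd hM.le
  have hεt : ε * ((n : ℚ) - 2 + (n - 3) * t) < t := by
    have hsize : (n : ℚ) - 2 + (n - 3) * t < 4 * A * n ^ 2 * m ^ 2 := by
      have h1 : (n : ℚ) ≤ n ^ 2 * m ^ 2 := (by nlinarith : (n : ℚ) ≤ n ^ 2).trans
        (le_mul_of_one_le_right (sq_nonneg _) (one_le_pow₀ hm'))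
      have h2 : (n : ℚ) - 2 + (n - 3) * t < 2 * n := by nlinarith
      nlinarith
    calc ε * ((n : ℚ) - 2 + (n - 3) * t) < ε * (4 * A * n ^ 2 * m ^ 2) := by gcongr
      _ = t := by rw [hε]; field_simp
  have hkey : ((n : ℚ) - 3) * M * (1 + ε) < S * (t - ε) := by
    have h1 : ((n : ℚ) - 2) * ((n - 3) * M * (1 + ε)) ≤ (n - 3) * (1 + ε) * (t * S) := by
      nlinarith [mul_le_mul_of_nonneg_left hMt (by positivity : (0 : ℚ) ≤ (n - 3) * (1 + ε))]
    have h2 : ((n : ℚ) - 3) * (1 + ε) * (t * S) < (n - 2) * (S * (t - ε)) := by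
      nlinarith [mul_lt_mul_of_pos_right hεt hS]
    exact lt_of_mul_lt_mul_left (h1.trans_lt h2) (by linarith)
  rw [div_mul_eq_mul_div, lt_sub_iff_add_lt, lt_div_iff₀ (by linarith)]
  nlinarith [mul_lt_mul_of_pos_left hkey (by linarith : (0 : ℚ) < A)]

theorem exists_load_add_lt (hr : ∀ i, 0 < r i) (P : Fin m → Fin n) {θ X : ℚ}
    (h : (#(almostFull x r P θ)ᶜ : ℚ) * X < θ * ∑ i, (r i : ℚ) - ∑ j, (x j : ℚ)) :
    ∃ i, load x P i + X < r i * θ := by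
  by_contra! hno
  have hfull : ∑ i ∈ almostFull x r P θ, ((r i : ℚ) * θ - load x P i) ≤ 0 := by
    refine sum_nonpos fun i hi => ?_
    have := (mem_filter.mp hi).2
    rw [btime_eq_load_div, lt_div_iff₀ (by exact_mod_cast hr i)] at this
    linarith
  have hrest : ∑ i ∈ (almostFull x r P θ)ᶜ, ((r i : ℚ) * θ - load x P i) ≤
      #(almostFull x r P θ)ᶜ * X := by
    rw [← nsmul_eq_mul]
    exact sum_le_card_nsmul _ _ _ fun i _ => by linarith [hno i]
  have htotal : θ * ∑ i, (r i : ℚ) - ∑ j, (x j : ℚ) = ∑ i, ((r i : ℚ) * θ - load x P i) := by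
    rw [sum_sub_distrib, sum_load, mul_sum]
    simp_rw [mul_comm θ]
  rw [htotal, ← sum_add_sum_compl (almostFull x r P θ)] at h
  linarith

theorem exists_move (hx : ∀ j, 0 < x j) (hr : ∀ i, 0 < r i) {P : Fin m → Fin n} {θ C X : ℚ}
    (hθ : 0 ≤ θ) (hθC : θ ≤ C) (hfeas : ∀ k, btime x r P k ≤ C) (hX : ∀ j, (x j : ℚ) ≤ X)
    (h3 : 3 ≤ #(almostFull x r P θ))
    (hslack : ((n : ℚ) - 3) * X < θ * ∑ i, (r i : ℚ) - ∑ j, (x j : ℚ)) :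
    ∃ Q, (∀ k, btime x r Q k ≤ C) ∧ #(almostFull x r P θ) ≤ #(almostFull x r Q θ) + 1 ∧
      fullWeight x r Q θ < fullWeight x r P θ := by
  obtain ⟨f, hf⟩ : (almostFull x r P θ).Nonempty := card_pos.mp (by omega)
  have hload : 0 < load x P f := by
    have := hθ.trans_lt (mem_filter.mp hf).2
    rwa [btime_eq_load_div, div_pos_iff_of_pos_right (by exact_mod_cast hr f)] at this
  obtain ⟨j, rfl⟩ := exists_eq_of_load_pos hload
  have hcompl : (#(almostFull x r P θ)ᶜ : ℚ) ≤ n - 3 := by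
    rw [card_compl, Fintype.card_fin, Nat.cast_sub card_almostFull_le]
    have : (3 : ℚ) ≤ #(almostFull x r P θ) := by exact_mod_cast h3
    linarith
  have hX0 : 0 ≤ X := (Nat.cast_nonneg _).trans (hX j)
  obtain ⟨i, hi⟩ :=
    exists_load_add_lt hr P ((mul_le_mul_of_nonneg_right hcompl hX0).trans_lt hslack)
  have hroom : load x P i + x j < r i * θ := by linarith [hX j]
  have hji : P j ≠ i := by
    rintro h
    rw [h] at hf
    exact (btime_lt_of_load_add_lt (hr i) hroom).not_gt (mem_filter.mp hf).2
  refine ⟨update P j i, fun k => ?_, ?_, fullWeight_update_lt (hr i) hroom (hx j) hji hf⟩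
  · by_cases hki : k = i
    · subst hki
      exact (btime_update_lt (hr k) hroom hji).le.trans hθC
    · exact (btime_update_le hki).trans (hfeas k)
  · exact (card_le_card (almostFull_subset_insert_update (hr i) hroom)).trans
      (card_insert_le _ _)

end Scheduling

open Scheduling

theorem stmt_7_general (m n : ℕ)
    (x : Fin m → ℕ) (hx : ∀ j, 0 < x j)
    (r : Fin n → ℕ) (hr : ∀ i, 0 < r i)
    (A : ℕ) (hA : A = ∑ i, r i)
    (S M : ℚ) (hS : S = (∑ j, (x j : ℚ)) / (A : ℚ))
    (hM : (A : ℚ) * M = ((Finset.univ.sup x : ℕ) : ℚ))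
    (d : ℚ) (hd : ((n : ℚ) - 2) ≤ d)
    (t : ℚ) (htdef : t = d * M / S) (ht1 : t < 1)
    (ε : ℚ) (hεdef : ε = t / (4 * (A : ℚ) * (n : ℚ) ^ 2 * (m : ℚ) ^ 2))
    (h2 : ∃ P : Fin m → Fin n,
        (∀ i, btime x r P i ≤ (1 + t) * S) ∧
        2 ≤ (Finset.univ.filter (fun i => (1 + t) * S / (1 + ε) < btime x r P i)).card) :
    ∃ P : Fin m → Fin n,
      (∀ i, btime x r P i ≤ (1 + t) * S) ∧
      (Finset.univ.filter (fun i => (1 + t) * S / (1 + ε) < btime x r P i)).card = 2 := by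
  obtain ⟨P₀, hP₀feas, hP₀card⟩ := h2
  have hm : 0 < m := Nat.pos_of_ne_zero <| by
    rintro rfl
    simp [btime, hS] at hP₀card
  have hn : 2 ≤ n := hP₀card.trans card_almostFull_le
  have hnA : n ≤ A := by simpa [hA] using card_nsmul_le_sum univ r 1 fun i _ => hr i
  have hA0 : (0 : ℚ) < A := by exact_mod_cast (by omega : 0 < A)
  have hAr : (A : ℚ) = ∑ i, (r i : ℚ) := by rw [hA]; push_cast; rfl
  have hsum : ∑ j, (x j : ℚ) = A * S := by rw [hS]; field_simp
  have hXmax : ∀ j, (x j : ℚ) ≤ A * M := fun j => by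
    rw [hM]; exact_mod_cast le_sup (mem_univ j)
  have hM0 : 0 < M :=
    pos_of_mul_pos_right ((Nat.cast_pos.mpr (hx ⟨0, hm⟩)).trans_le (hXmax _)) hA0.le
  have hS0 : 0 < S := by
    rw [hS]
    exact div_pos (sum_pos (fun j _ => by exact_mod_cast hx j) ⟨⟨0, hm⟩, mem_univ _⟩) hA0
  have ht0 : 0 ≤ t := by
    have : (2 : ℚ) ≤ n := by exact_mod_cast hn
    rw [htdef]
    exact div_nonneg (mul_nonneg (by linarith) hM0.le) hS0.le
  have hε0 : 0 ≤ ε := by rw [hεdef]; positivity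
  set θ := (1 + t) * S / (1 + ε)
  refine exists_eq_of_descent (fun P => ∀ i, btime x r P i ≤ (1 + t) * S)
    (fun P => #(almostFull x r P θ)) (fun P => fullWeight x r P θ) 2 (fun P hP h3 => ?_)
    P₀ hP₀feas hP₀card
  refine exists_move hx hr (by positivity) (div_le_self (by positivity) (by linarith)) hP hXmax
    h3 ?_
  rw [← hAr, hsum]
  exact sub_three_mul_lt_slack (lt_of_lt_of_le h3 card_almostFull_le) hnA hm hS0 hM0 hd htdef
    ht1 hεdef

/-- if there exists a `t`-feasible partition with at least two almost-full
machines, then there exists a `t`-feasible partition with exactly two almost-full machines. -/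
theorem stmt_7 (m n : ℕ) (hn : 3 ≤ n) (hm : n < m)
    (x : Fin m → ℕ) (hx : ∀ j, 0 < x j)
    (r : Fin n → ℕ) (hr : ∀ i, 0 < r i)
    (A : ℕ) (hA : A = ∑ i, r i)
    (S M : ℚ) (hS : S = (∑ j, (x j : ℚ)) / (A : ℚ))
    (hM : (A : ℚ) * M = ((Finset.univ.sup x : ℕ) : ℚ))
    (d : ℚ) (hd : ((n : ℚ) - 2) ≤ d)
    (t : ℚ) (htdef : t = d * M / S) (ht1 : t < 1)
    (ε : ℚ) (hεdef : ε = t / (4 * (A : ℚ) * (n : ℚ) ^ 2 * (m : ℚ) ^ 2))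
    (h2 : ∃ P : Fin m → Fin n,
        (∀ i, btime x r P i ≤ (1 + t) * S) ∧
        2 ≤ (Finset.univ.filter (fun i => (1 + t) * S / (1 + ε) < btime x r P i)).card) :
    ∃ P : Fin m → Fin n,
      (∀ i, btime x r P i ≤ (1 + t) * S) ∧
      (Finset.univ.filter (fun i => (1 + t) * S / (1 + ε) < btime x r P i)).card = 2 :=
  stmt_7_general m n x hx r hr A hA S M hS hM d hd t htdef ht1 ε hεdef h2
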